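/- arXiv:2401.01804 — 6 statements merged into one kernel-verified Lean document; each statement's English description precedes it below -/
import Mathlib

section
/- Let S₊ and S₋ be disjoint finite subsets of ℝ^d with S₊ nonempty and S₋ nonempty, let θ ∈ ℝ^d, and set d_I = min_{s∈S₊} ‖s − θ‖ and d_E = min_{s∈S₋} ‖s − θ‖. Suppose d_I < d_E and σ > 0 satisfies 2σ²·log|S₋| < d_E² − d_I². Then the simplified Gaussian RBF decision value is positive: Σ_{s∈S₊} exp(−‖s − θ‖²/(2σ²)) − Σ_{s∈S₋} exp(−‖s − θ‖²/(2σ²)) > 0, i.e. the SVM classifier with this tuning assigns θ the label 1. -/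
/-- If the nearest positively-labelled grid point is closer to `θ` than the
nearest negatively-labelled grid point, and the bandwidth `σ > 0` satisfies
`2σ²·log|S₋| < d_E² − d_I²`, then the simplified Gaussian RBF decision value
of `θ` is positive: the SVM classifier assigns `θ` the label `1`. -/
theorem statement6 {d : ℕ} (Sp Sm : Finset (EuclideanSpace ℝ (Fin d)))
    (hdisj : Disjoint (Sp : Set (EuclideanSpace ℝ (Fin d)))
      (Sm : Set (EuclideanSpace ℝ (Fin d))))
    (hSp : Sp.Nonempty) (hSm : Sm.Nonempty) (θ : EuclideanSpace ℝ (Fin d))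
    (dI dE : ℝ) (hdI : dI = Sp.inf' hSp fun s => ‖s - θ‖)
    (hdE : dE = Sm.inf' hSm fun s => ‖s - θ‖)
    (hlt : dI < dE) (σ : ℝ) (hσ : 0 < σ)
    (htune : 2 * σ ^ 2 * Real.log Sm.card < dE ^ 2 - dI ^ 2) :
    0 < (∑ s ∈ Sp, Real.exp (-‖s - θ‖ ^ 2 / (2 * σ ^ 2))) -
        ∑ s ∈ Sm, Real.exp (-‖s - θ‖ ^ 2 / (2 * σ ^ 2)) := by
  have hσ2 : (0:ℝ) < 2 * σ ^ 2 := by positivity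
  -- pick minimizer in Sp
  obtain ⟨s0, hs0, hs0v⟩ := Sp.exists_mem_eq_inf' hSp (fun s => ‖s - θ‖)
  have hdI0 : dI = ‖s0 - θ‖ := by rw [hdI, hs0v]
  have hdInn : 0 ≤ dI := hdI0 ▸ norm_nonneg _
  -- positive sum lower bound
  have h1 : Real.exp (-dI ^ 2 / (2 * σ ^ 2)) ≤
      ∑ s ∈ Sp, Real.exp (-‖s - θ‖ ^ 2 / (2 * σ ^ 2)) := by
    rw [hdI0]
    exact Finset.single_le_sum (f := fun s => Real.exp (-‖s - θ‖ ^ 2 / (2 * σ ^ 2)))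
      (fun s _ => (Real.exp_pos _).le) hs0
  -- negative sum upper bound
  have h2 : ∑ s ∈ Sm, Real.exp (-‖s - θ‖ ^ 2 / (2 * σ ^ 2)) ≤
      Sm.card * Real.exp (-dE ^ 2 / (2 * σ ^ 2)) := by
    calc ∑ s ∈ Sm, Real.exp (-‖s - θ‖ ^ 2 / (2 * σ ^ 2))
        ≤ ∑ _s ∈ Sm, Real.exp (-dE ^ 2 / (2 * σ ^ 2)) := by
          apply Finset.sum_le_sum
          intro s hs
          apply Real.exp_le_exp.mpr
          apply div_le_div_of_nonneg_right _ hσ2.le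
          have hle : dE ≤ ‖s - θ‖ := hdE ▸ Finset.inf'_le _ hs
          have hdEnn : 0 ≤ dE := le_trans hdInn hlt.le
          have := sq_le_sq' (by linarith [norm_nonneg (s - θ)]) hle
          linarith
      _ = Sm.card * Real.exp (-dE ^ 2 / (2 * σ ^ 2)) := by
          rw [Finset.sum_const, nsmul_eq_mul]
  -- key inequality
  have hcard : (1:ℝ) ≤ Sm.card := by
    exact_mod_cast Nat.one_le_iff_ne_zero.mpr (Finset.card_ne_zero_of_mem hSm.choose_spec)
  have hkey : (Sm.card : ℝ) * Real.exp (-dE ^ 2 / (2 * σ ^ 2)) <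
      Real.exp (-dI ^ 2 / (2 * σ ^ 2)) := by
    rw [← Real.exp_log (by linarith : (0:ℝ) < (Sm.card:ℝ)), ← Real.exp_add,
      Real.exp_lt_exp]
    have hd : (dE ^ 2 - dI ^ 2) / (2 * σ ^ 2) = -dI ^ 2 / (2 * σ ^ 2) - -dE ^ 2 / (2 * σ ^ 2) := by
      ring
    have hl : Real.log Sm.card < (dE ^ 2 - dI ^ 2) / (2 * σ ^ 2) :=
      (lt_div_iff₀ hσ2).mpr (by linarith)
    linarith
  linarith
end

section
/- Let S₊ and S₋ be disjoint finite subsets of ℝ^d with S₊ nonempty and S₋ nonempty, let θ̃ ∈ ℝ^d, and set d_I = min_{s∈S₊} ‖s − θ̃‖ and d_E = min_{s∈S₋} ‖s − θ̃‖. Suppose d_E < d_I and σ > 0 satisfies 2σ²·log|S₊| < d_I² − d_E². Then the simplified Gaussian RBF decision value is negative: Σ_{s∈S₊} exp(−‖s − θ̃‖²/(2σ²)) − Σ_{s∈S₋} exp(−‖s − θ̃‖²/(2σ²)) < 0, i.e. the SVM classifier with this tuning assigns θ̃ the label −1. -/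
set_option maxHeartbeats 1000000


/-- If the nearest negatively-labelled grid point is closer to `θ̃` than the
nearest positively-labelled grid point, and the bandwidth `σ > 0` satisfies
`2σ²·log|S₊| < d_I² − d_E²`, then the simplified Gaussian RBF decision value
of `θ̃` is negative: the SVM classifier assigns `θ̃` the label `-1`. -/
theorem statement7 {d : ℕ} (Sp Sm : Finset (EuclideanSpace ℝ (Fin d)))
    (hdisj : Disjoint (Sp : Set (EuclideanSpace ℝ (Fin d)))
      (Sm : Set (EuclideanSpace ℝ (Fin d))))
    (hSp : Sp.Nonempty) (hSm : Sm.Nonempty) (θ : EuclideanSpace ℝ (Fin d))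
    (dI dE : ℝ) (hdI : dI = Sp.inf' hSp fun s => ‖s - θ‖)
    (hdE : dE = Sm.inf' hSm fun s => ‖s - θ‖)
    (hlt : dE < dI) (σ : ℝ) (hσ : 0 < σ)
    (htune : 2 * σ ^ 2 * Real.log Sp.card < dI ^ 2 - dE ^ 2) :
    (∑ s ∈ Sp, Real.exp (-‖s - θ‖ ^ 2 / (2 * σ ^ 2))) -
        (∑ s ∈ Sm, Real.exp (-‖s - θ‖ ^ 2 / (2 * σ ^ 2))) < 0 := by
  have hσ2 : (0:ℝ) < 2 * σ ^ 2 := by positivity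
  have hdInn : 0 ≤ dI := by
    obtain ⟨s, hs, heq⟩ := Finset.exists_mem_eq_inf' hSp fun s => ‖s - θ‖
    rw [hdI, heq]; positivity
  -- upper bound on positive sum
  have hub : (∑ s ∈ Sp, Real.exp (-‖s - θ‖ ^ 2 / (2 * σ ^ 2)))
      ≤ Sp.card * Real.exp (-dI ^ 2 / (2 * σ ^ 2)) := by
    calc (∑ s ∈ Sp, Real.exp (-‖s - θ‖ ^ 2 / (2 * σ ^ 2)))
        ≤ ∑ _s ∈ Sp, Real.exp (-dI ^ 2 / (2 * σ ^ 2)) := by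
          refine Finset.sum_le_sum fun s hs => ?_
          apply Real.exp_le_exp.2
          have h1 : dI ≤ ‖s - θ‖ := hdI ▸ Finset.inf'_le _ hs
          have h2 : dI ^ 2 ≤ ‖s - θ‖ ^ 2 := pow_le_pow_left₀ hdInn h1 2
          exact (div_le_div_iff_of_pos_right hσ2).2 (by linarith)
      _ = Sp.card * Real.exp (-dI ^ 2 / (2 * σ ^ 2)) := by
          rw [Finset.sum_const, nsmul_eq_mul]
  -- lower bound on negative sum
  obtain ⟨s₀, hs₀, heq₀⟩ := Finset.exists_mem_eq_inf' hSm fun s => ‖s - θ‖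
  have hlb : Real.exp (-dE ^ 2 / (2 * σ ^ 2))
      ≤ ∑ s ∈ Sm, Real.exp (-‖s - θ‖ ^ 2 / (2 * σ ^ 2)) := by
    have : Real.exp (-‖s₀ - θ‖ ^ 2 / (2 * σ ^ 2))
        ≤ ∑ s ∈ Sm, Real.exp (-‖s - θ‖ ^ 2 / (2 * σ ^ 2)) :=
      Finset.single_le_sum (f := fun s => Real.exp (-‖s - θ‖ ^ 2 / (2 * σ ^ 2))) (fun s _ => (Real.exp_pos _).le) hs₀
    have hE : dE = ‖s₀ - θ‖ := hdE.trans heq₀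
    rw [hE]; exact this
  -- key inequality
  have hcard : (0:ℝ) < Sp.card := by exact_mod_cast hSp.card_pos
  have hkey : (Sp.card : ℝ) * Real.exp (-dI ^ 2 / (2 * σ ^ 2))
      < Real.exp (-dE ^ 2 / (2 * σ ^ 2)) := by
    have h1 : Real.log Sp.card < (dI ^ 2 - dE ^ 2) / (2 * σ ^ 2) := by
      rw [lt_div_iff₀ hσ2]; linarith
    have h2 : (Sp.card : ℝ) < Real.exp ((dI ^ 2 - dE ^ 2) / (2 * σ ^ 2)) :=
      (Real.log_lt_iff_lt_exp hcard).1 h1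
    calc (Sp.card : ℝ) * Real.exp (-dI ^ 2 / (2 * σ ^ 2))
        < Real.exp ((dI ^ 2 - dE ^ 2) / (2 * σ ^ 2)) * Real.exp (-dI ^ 2 / (2 * σ ^ 2)) :=
          mul_lt_mul_of_pos_right h2 (Real.exp_pos _)
      _ = Real.exp (-dE ^ 2 / (2 * σ ^ 2)) := by
          rw [← Real.exp_add]; ring_nf
  linarith
end

section
/- Let Θ ⊆ ℝ^d, let CS ⊆ Θ, and let (S_n)_{n∈ℕ} be a nested sequence of finite subsets of Θ (S_n ⊆ S_{n+1}) whose union is dense in Θ. Let θ lie in the interior of CS and suppose S_n \ CS is nonempty for all n. Then there exists N ∈ ℕ such that for every n ≥ N there exists a bandwidth σ > 0 for which the simplified Gaussian RBF decision value of θ, computed from the grid S_n labelled by CS (points of S_n ∩ CS get label 1, points of S_n \ CS get label −1), is positive: Σ_{s∈S_n∩CS} exp(−‖s − θ‖²/(2σ²)) > Σ_{s∈S_n\CS} exp(−‖s − θ‖²/(2σ²)). In particular, every interior point of the confidence set is, for all sufficiently large grids and a suitable tuning, classified as label 1 by the SVM classifier. -/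
set_option maxHeartbeats 1000000


open scoped Classical

/-- Every point in the interior of the confidence set `CS` is, for all
sufficiently large grids and a suitable bandwidth, classified as label `1`:
the simplified Gaussian RBF decision value computed from the grid `S n`
labelled by `CS` is positive. -/
theorem statement8 {d : ℕ} (Θ CS : Set (EuclideanSpace ℝ (Fin d))) (hCS : CS ⊆ Θ)
    (S : ℕ → Finset (EuclideanSpace ℝ (Fin d)))
    (hsub : ∀ n, (S n : Set (EuclideanSpace ℝ (Fin d))) ⊆ Θ)
    (hnest : ∀ n, S n ⊆ S (n + 1))
    (hdense : Θ ⊆ closure (⋃ n, (S n : Set (EuclideanSpace ℝ (Fin d)))))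
    (θ : EuclideanSpace ℝ (Fin d)) (hθ : θ ∈ interior CS)
    (hne : ∀ n, ∃ s ∈ S n, s ∉ CS) :
    ∃ N : ℕ, ∀ n ≥ N, ∃ σ > (0 : ℝ),
      (∑ s ∈ (S n).filter (· ∈ CS), Real.exp (-‖s - θ‖ ^ 2 / (2 * σ ^ 2))) >
        ∑ s ∈ (S n).filter (· ∉ CS), Real.exp (-‖s - θ‖ ^ 2 / (2 * σ ^ 2)) := by
  have hθΘ : θ ∈ Θ := hCS (interior_subset hθ)
  obtain ⟨ε, hε, hball⟩ := Metric.mem_nhds_iff.mp (mem_interior_iff_mem_nhds.mp hθ)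
  have hcl : θ ∈ closure (⋃ n, (S n : Set (EuclideanSpace ℝ (Fin d)))) := hdense hθΘ
  obtain ⟨s₀, hs₀mem, hs₀d⟩ := Metric.mem_closure_iff.mp hcl ε hε
  obtain ⟨N, hs₀N⟩ := Set.mem_iUnion.mp hs₀mem
  have hmono : Monotone S := monotone_nat_of_le_succ hnest
  refine ⟨N, fun n hn => ?_⟩
  have hs₀n : s₀ ∈ S n := hmono hn hs₀N
  have hs₀norm : ‖s₀ - θ‖ < ε := by
    rw [← dist_eq_norm, dist_comm]; exact hs₀d
  have hs₀CS : s₀ ∈ CS := hball (by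
    simp only [Metric.mem_ball, dist_eq_norm]; exact hs₀norm)
  set a := ‖s₀ - θ‖ ^ 2 with ha
  set b := ε ^ 2 with hb
  have hab : a < b := by nlinarith [norm_nonneg (s₀ - θ)]
  set K := ((S n).card : ℝ) with hKdef
  have hK1 : (1 : ℝ) ≤ K := by
    have h : 1 ≤ (S n).card := Finset.card_pos.mpr ⟨s₀, hs₀n⟩
    rw [hKdef]; exact_mod_cast h
  set t := Real.log (K + 1) / (b - a) with htdef
  have ht : 0 < t := div_pos (Real.log_pos (by linarith)) (by linarith)
  refine ⟨(Real.sqrt (2 * t))⁻¹, inv_pos.mpr (Real.sqrt_pos.mpr (by linarith)), ?_⟩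
  have hσ : 2 * ((Real.sqrt (2 * t))⁻¹) ^ 2 = t⁻¹ := by
    rw [inv_pow, Real.sq_sqrt (by linarith)]
    field_simp
  simp only [hσ, div_inv_eq_mul]
  have hpos : Real.exp (-a * t) ≤
      ∑ s ∈ (S n).filter (· ∈ CS), Real.exp (-‖s - θ‖ ^ 2 * t) :=
    Finset.single_le_sum (f := fun s => Real.exp (-‖s - θ‖ ^ 2 * t))
      (fun s _ => (Real.exp_pos _).le) (Finset.mem_filter.mpr ⟨hs₀n, hs₀CS⟩)
  have hneg : ∑ s ∈ (S n).filter (· ∉ CS), Real.exp (-‖s - θ‖ ^ 2 * t) ≤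
      K * Real.exp (-b * t) := by
    calc ∑ s ∈ (S n).filter (· ∉ CS), Real.exp (-‖s - θ‖ ^ 2 * t)
        ≤ ∑ _s ∈ (S n).filter (· ∉ CS), Real.exp (-b * t) := by
          refine Finset.sum_le_sum fun s hs => ?_
          have hsCS : s ∉ CS := (Finset.mem_filter.mp hs).2
          have hd : ε ≤ ‖s - θ‖ := by
            by_contra h
            push_neg at h
            exact hsCS (hball (by simp only [Metric.mem_ball, dist_eq_norm]; exact h))
          have hbs : b ≤ ‖s - θ‖ ^ 2 := by nlinarith [norm_nonneg (s - θ)]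
          exact Real.exp_le_exp.mpr (by nlinarith)
      _ = (((S n).filter (· ∉ CS)).card : ℝ) * Real.exp (-b * t) := by
          rw [Finset.sum_const, nsmul_eq_mul]
      _ ≤ K * Real.exp (-b * t) := by
          refine mul_le_mul_of_nonneg_right ?_ (Real.exp_pos _).le
          rw [hKdef]
          exact_mod_cast Finset.card_filter_le (S n) _
  have hkey : K * Real.exp (-b * t) < Real.exp (-a * t) := by
    have hba : b - a ≠ 0 := by linarith
    have h1 : (b - a) * t = Real.log (K + 1) := by
      rw [htdef, mul_div_assoc', mul_comm, mul_div_assoc, div_self hba, mul_one]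
    have h2 : Real.exp ((b - a) * t) = K + 1 := by
      rw [h1, Real.exp_log (by linarith)]
    have h3 : -a * t = -b * t + (b - a) * t := by ring
    rw [h3, Real.exp_add, h2]
    nlinarith [Real.exp_pos (-b * t)]
  linarith
end

section
/- Let Θ ⊆ ℝ^d, let CS ⊆ Θ, and let (S_n)_{n∈ℕ} be a nested sequence of finite subsets of Θ (S_n ⊆ S_{n+1}) whose union is dense in Θ. Suppose S_n ∩ CS and S_n \ CS are nonempty for all n. Let θ ∈ Θ be a point that lies either in the interior of CS or in the interior of the complement of CS (i.e. θ is not a boundary point of CS). Then there exists N ∈ ℕ such that for every n ≥ N there exists a bandwidth σ > 0 such that: θ ∈ CS if and only if the simplified Gaussian RBF decision value of θ, computed from the grid S_n labelled by CS, is positive. That is, with suitable tuning, a point belongs to the confidence set if and only if the SVM classifier labels it 1. -/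
open scoped Classical

/-- Key bandwidth-tuning lemma: if some point of `A` is strictly closer to `θ`
than `ε`, while every point of `B` is at distance at least `ε`, then for small
enough bandwidth the RBF sum over `A` dominates the sum over `B`. -/
lemma aux_rbf {E : Type*} [NormedAddCommGroup E] (A B : Finset E) (θ s₀ : E)
    (hs₀ : s₀ ∈ A) (ε : ℝ) (ha : ‖s₀ - θ‖ < ε) (hB : ∀ s ∈ B, ε ≤ ‖s - θ‖) :
    ∃ σ > (0 : ℝ), (∑ s ∈ B, Real.exp (-‖s - θ‖ ^ 2 / (2 * σ ^ 2))) <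
      ∑ s ∈ A, Real.exp (-‖s - θ‖ ^ 2 / (2 * σ ^ 2)) := by
  set a := ‖s₀ - θ‖ with ha'
  have ha0 : 0 ≤ a := norm_nonneg _
  have hε : 0 < ε := lt_of_le_of_lt ha0 ha
  set t : ℝ := (ε ^ 2 - a ^ 2) / 2 with ht'
  have ht : 0 < t := by
    have : a ^ 2 < ε ^ 2 := by nlinarith
    rw [ht']; linarith
  set C : ℝ := (B.card : ℝ) with hC'
  have hC0 : 0 ≤ C := by positivity
  set L : ℝ := Real.log (C + 1) + 1 with hL'
  have hlog : 0 ≤ Real.log (C + 1) := Real.log_nonneg (by linarith)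
  have hL : 0 < L := by rw [hL']; linarith
  refine ⟨Real.sqrt (t / L), Real.sqrt_pos.mpr (by positivity), ?_⟩
  set σ := Real.sqrt (t / L) with hσ'
  have hσ2 : σ ^ 2 = t / L := Real.sq_sqrt (by positivity)
  have hσ2pos : 0 < σ ^ 2 := by rw [hσ2]; positivity
  have hden : (0 : ℝ) < 2 * σ ^ 2 := by positivity
  have h1 : (∑ s ∈ B, Real.exp (-‖s - θ‖ ^ 2 / (2 * σ ^ 2))) ≤
      C * Real.exp (-ε ^ 2 / (2 * σ ^ 2)) := by
    rw [hC']
    calc (∑ s ∈ B, Real.exp (-‖s - θ‖ ^ 2 / (2 * σ ^ 2)))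
        ≤ ∑ _s ∈ B, Real.exp (-ε ^ 2 / (2 * σ ^ 2)) := by
          apply Finset.sum_le_sum
          intro s hs
          apply Real.exp_le_exp.mpr
          have hs' := hB s hs
          have h2 : ε ^ 2 ≤ ‖s - θ‖ ^ 2 := by nlinarith [norm_nonneg (s - θ)]
          have : -‖s - θ‖ ^ 2 ≤ -ε ^ 2 := by linarith
          exact div_le_div_of_nonneg_right this hden.le |>.trans_eq rfl
      _ = (B.card : ℝ) * Real.exp (-ε ^ 2 / (2 * σ ^ 2)) := by
          rw [Finset.sum_const, nsmul_eq_mul]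
  have hkey : C < Real.exp (t / σ ^ 2) := by
    have : t / σ ^ 2 = L := by
      rw [hσ2]; field_simp
    rw [this, hL', Real.exp_add, Real.exp_log (by linarith : (0:ℝ) < C + 1)]
    nlinarith [Real.exp_one_gt_d9]
  have h2 : C * Real.exp (-ε ^ 2 / (2 * σ ^ 2)) < Real.exp (-a ^ 2 / (2 * σ ^ 2)) := by
    have hsplit : -a ^ 2 / (2 * σ ^ 2) = t / σ ^ 2 + (-ε ^ 2 / (2 * σ ^ 2)) := by
      rw [ht']; field_simp; ring
    rw [hsplit, Real.exp_add]
    exact mul_lt_mul_of_pos_right hkey (Real.exp_pos _)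
  have h3 : Real.exp (-a ^ 2 / (2 * σ ^ 2)) ≤
      ∑ s ∈ A, Real.exp (-‖s - θ‖ ^ 2 / (2 * σ ^ 2)) := by
    have := Finset.single_le_sum
      (f := fun s => Real.exp (-‖s - θ‖ ^ 2 / (2 * σ ^ 2)))
      (fun s _ => (Real.exp_pos _).le) hs₀
    simpa [ha'] using this
  linarith

/-- Corollary 1 of the paper: for any point `θ` that is not a boundary point of
the confidence set `CS`, for all sufficiently large grids there is a bandwidth
`σ > 0` such that `θ ∈ CS` if and only if the SVM classifier (the simplified
Gaussian RBF decision value on the grid labelled by `CS`) labels `θ` as `1`. -/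
theorem statement9 {d : ℕ} (Θ CS : Set (EuclideanSpace ℝ (Fin d))) (hCS : CS ⊆ Θ)
    (S : ℕ → Finset (EuclideanSpace ℝ (Fin d)))
    (hsub : ∀ n, (S n : Set (EuclideanSpace ℝ (Fin d))) ⊆ Θ)
    (hnest : ∀ n, S n ⊆ S (n + 1))
    (hdense : Θ ⊆ closure (⋃ n, (S n : Set (EuclideanSpace ℝ (Fin d)))))
    (hpos : ∀ n, ((S n : Set (EuclideanSpace ℝ (Fin d))) ∩ CS).Nonempty)
    (hneg : ∀ n, ((S n : Set (EuclideanSpace ℝ (Fin d))) \ CS).Nonempty)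
    (θ : EuclideanSpace ℝ (Fin d)) (hθ : θ ∈ Θ)
    (hnb : θ ∈ interior CS ∨ θ ∈ interior CSᶜ) :
    ∃ N : ℕ, ∀ n ≥ N, ∃ σ > (0 : ℝ),
      (θ ∈ CS ↔
        (∑ s ∈ (S n).filter (· ∈ CS), Real.exp (-‖s - θ‖ ^ 2 / (2 * σ ^ 2))) >
          ∑ s ∈ (S n).filter (· ∉ CS), Real.exp (-‖s - θ‖ ^ 2 / (2 * σ ^ 2))) := by
  have hmono : Monotone S := monotone_nat_of_le_succ fun n =>
    Finset.le_iff_subset.mpr (hnest n)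
  rcases hnb with hin | hout
  · -- θ in interior of CS
    obtain ⟨ε, hε0, hball⟩ := Metric.mem_nhds_iff.mp (mem_interior_iff_mem_nhds.mp hin)
    obtain ⟨s₀, hs₀mem, hs₀d⟩ := Metric.mem_closure_iff.mp (hdense hθ) ε hε0
    obtain ⟨N, hs₀N⟩ : ∃ N, s₀ ∈ S N := by
      simpa using hs₀mem
    have hs₀ball : s₀ ∈ Metric.ball θ ε := by
      rw [Metric.mem_ball, dist_comm]; exact hs₀d
    have hs₀CS : s₀ ∈ CS := hball hs₀ball
    have hθCS : θ ∈ CS := interior_subset hin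
    refine ⟨N, fun n hn => ?_⟩
    have hs₀n : s₀ ∈ S n := hmono hn hs₀N
    have hB : ∀ s ∈ (S n).filter (· ∉ CS), ε ≤ ‖s - θ‖ := by
      intro s hs
      have hsCS : s ∉ CS := (Finset.mem_filter.mp hs).2
      have : s ∉ Metric.ball θ ε := fun h => hsCS (hball h)
      rw [Metric.mem_ball, not_lt, dist_eq_norm] at this
      exact this
    obtain ⟨σ, hσ, hlt⟩ := aux_rbf ((S n).filter (· ∈ CS)) ((S n).filter (· ∉ CS)) θ s₀
      (Finset.mem_filter.mpr ⟨hs₀n, hs₀CS⟩) ε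
      (by rwa [← dist_eq_norm, dist_comm]) hB
    exact ⟨σ, hσ, by simp [hθCS, hlt]⟩
  · -- θ in interior of CSᶜ
    obtain ⟨ε, hε0, hball⟩ := Metric.mem_nhds_iff.mp (mem_interior_iff_mem_nhds.mp hout)
    obtain ⟨s₀, hs₀mem, hs₀d⟩ := Metric.mem_closure_iff.mp (hdense hθ) ε hε0
    obtain ⟨N, hs₀N⟩ : ∃ N, s₀ ∈ S N := by
      simpa using hs₀mem
    have hs₀ball : s₀ ∈ Metric.ball θ ε := by
      rw [Metric.mem_ball, dist_comm]; exact hs₀d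
    have hs₀CS : s₀ ∉ CS := hball hs₀ball
    have hθCS : θ ∉ CS := interior_subset hout
    refine ⟨N, fun n hn => ?_⟩
    have hs₀n : s₀ ∈ S n := hmono hn hs₀N
    have hB : ∀ s ∈ (S n).filter (· ∈ CS), ε ≤ ‖s - θ‖ := by
      intro s hs
      have hsCS : s ∈ CS := (Finset.mem_filter.mp hs).2
      have : s ∉ Metric.ball θ ε := fun h => hball h hsCS
      rw [Metric.mem_ball, not_lt, dist_eq_norm] at this
      exact this
    obtain ⟨σ, hσ, hlt⟩ := aux_rbf ((S n).filter (· ∉ CS)) ((S n).filter (· ∈ CS)) θ s₀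
      (Finset.mem_filter.mpr ⟨hs₀n, hs₀CS⟩) ε
      (by rwa [← dist_eq_norm, dist_comm]) hB
    refine ⟨σ, hσ, ?_⟩
    constructor
    · intro h; exact absurd h hθCS
    · intro h; exact absurd (h.trans hlt) (lt_irrefl _)
end

section
/- Let C ⊆ ℝ^d be a fixed set (a finite-sample confidence set) and let (S_m)_{m∈ℕ} be a nested sequence of finite subsets of ℝ^d whose union is dense in a set Θ ⊇ C, with S_m \ C nonempty for all m. Then for every θ in the interior of C there exists M ∈ ℕ such that for every m ≥ M there exists σ > 0 with Σ_{s∈S_m∩C} exp(−‖s − θ‖²/(2σ²)) > Σ_{s∈S_m\C} exp(−‖s − θ‖²/(2σ²)); that is, as the grid grows so as to fully explore the parameter space, there exists tuning such that θ ∈ C implies the SVM classifier labels θ as 1. -/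
open scoped Classical

/-- Finite-sample version: for a fixed confidence set `C` and a nested sequence
of finite grids whose union is dense in a set `Θ ⊇ C`, every interior point
`θ` of `C` is, for all sufficiently large grids and a suitable bandwidth,
labelled `1` by the SVM classifier trained on the grid labelled by `C`. -/
theorem statement10 {d : ℕ} (C Θ : Set (EuclideanSpace ℝ (Fin d))) (hCΘ : C ⊆ Θ)
    (S : ℕ → Finset (EuclideanSpace ℝ (Fin d)))
    (hnest : ∀ m, S m ⊆ S (m + 1))
    (hdense : Θ ⊆ closure (⋃ m, (S m : Set (EuclideanSpace ℝ (Fin d)))))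
    (hne : ∀ m, ∃ s ∈ S m, s ∉ C) :
    ∀ θ ∈ interior C, ∃ M : ℕ, ∀ m ≥ M, ∃ σ > (0 : ℝ),
      (∑ s ∈ (S m).filter (· ∈ C), Real.exp (-‖s - θ‖ ^ 2 / (2 * σ ^ 2))) >
        ∑ s ∈ (S m).filter (· ∉ C), Real.exp (-‖s - θ‖ ^ 2 / (2 * σ ^ 2)) := by
  intro θ hθ
  obtain ⟨ε, hε, hball⟩ := Metric.isOpen_iff.mp isOpen_interior θ hθ
  have hθC : θ ∈ C := interior_subset hθ
  have hθcl : θ ∈ closure (⋃ m, (S m : Set (EuclideanSpace ℝ (Fin d)))) :=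
    hdense (hCΘ hθC)
  rw [Metric.mem_closure_iff] at hθcl
  obtain ⟨s₀, hs₀mem, hs₀d⟩ := hθcl (ε / 2) (by positivity)
  simp only [Set.mem_iUnion, Finset.mem_coe] at hs₀mem
  obtain ⟨M, hM⟩ := hs₀mem
  have hs₀C : s₀ ∈ C := by
    have : s₀ ∈ Metric.ball θ ε := by
      rw [Metric.mem_ball, dist_comm]
      linarith
    exact interior_subset (hball this)
  refine ⟨M, fun m hm => ?_⟩
  have hs₀m : s₀ ∈ S m := (monotone_nat_of_le_succ hnest hm : S M ≤ S m) hM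
  set F := (S m).filter (fun s => s ∉ C) with hF
  have hFne : F.Nonempty := by
    obtain ⟨x, hx, hxC⟩ := hne m
    exact ⟨x, Finset.mem_filter.mpr ⟨hx, hxC⟩⟩
  set N : ℝ := (F.card : ℝ) with hN
  have hN1 : (1 : ℝ) ≤ N := by
    have h : 1 ≤ F.card := Finset.card_pos.mpr hFne
    rw [hN]
    exact_mod_cast h
  have hN0 : (0 : ℝ) < N := lt_of_lt_of_le one_pos hN1
  set L : ℝ := Real.log N + 1 with hL
  have hL0 : (0 : ℝ) < L := by
    have := Real.log_nonneg hN1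
    linarith
  set a : ℝ := ‖s₀ - θ‖ ^ 2 with ha
  set b : ℝ := ε ^ 2 with hb
  have hab : a < b := by
    have h1 : ‖s₀ - θ‖ = dist s₀ θ := by rw [dist_eq_norm]
    have h2 : ‖s₀ - θ‖ < ε := by rw [h1, dist_comm]; linarith
    have h3 : (0:ℝ) ≤ ‖s₀ - θ‖ := norm_nonneg _
    calc a = ‖s₀ - θ‖ ^ 2 := rfl
      _ < ε ^ 2 := by nlinarith
  have hba : (0 : ℝ) < b - a := by linarith
  refine ⟨Real.sqrt ((b - a) / (2 * L)), Real.sqrt_pos.mpr (by positivity), ?_⟩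
  set σ := Real.sqrt ((b - a) / (2 * L)) with hσ
  have hσ2 : σ ^ 2 = (b - a) / (2 * L) := Real.sq_sqrt (by positivity)
  have ht0 : (0 : ℝ) < 2 * σ ^ 2 := by rw [hσ2]; positivity
  set t : ℝ := 2 * σ ^ 2 with htdef
  have htL : (b - a) / t = L := by
    rw [htdef, hσ2]
    field_simp
  -- upper bound for the negative-class sum
  have hupper : (∑ s ∈ F, Real.exp (-‖s - θ‖ ^ 2 / t)) ≤ N * Real.exp (-b / t) := by
    have : ∀ s ∈ F, Real.exp (-‖s - θ‖ ^ 2 / t) ≤ Real.exp (-b / t) := by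
      intro s hs
      obtain ⟨hsm, hsC⟩ := Finset.mem_filter.mp hs
      have hdist : ε ≤ ‖s - θ‖ := by
        by_contra h
        push_neg at h
        have : s ∈ Metric.ball θ ε := by
          rw [Metric.mem_ball, dist_eq_norm]; exact h
        exact hsC (interior_subset (hball this))
      have hb2 : b ≤ ‖s - θ‖ ^ 2 := by
        have : (0:ℝ) ≤ ε := le_of_lt hε
        nlinarith
      apply Real.exp_le_exp.mpr
      rw [div_le_div_iff₀ ht0 ht0]
      nlinarith
    calc (∑ s ∈ F, Real.exp (-‖s - θ‖ ^ 2 / t))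
        ≤ ∑ _s ∈ F, Real.exp (-b / t) := Finset.sum_le_sum this
      _ = N * Real.exp (-b / t) := by rw [Finset.sum_const, nsmul_eq_mul]
  -- strict comparison
  have hkey : N * Real.exp (-b / t) < Real.exp (-a / t) := by
    have hsplit : Real.exp (-a / t) = Real.exp (-b / t) * Real.exp ((b - a) / t) := by
      rw [← Real.exp_add]
      congr 1
      field_simp
      ring
    rw [hsplit, htL, hL, Real.exp_add, Real.exp_log hN0, mul_comm (Real.exp (-b/t))]
    have he : (1 : ℝ) < Real.exp 1 := by
      have := Real.add_one_le_exp 1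
      linarith
    have : N * 1 < N * Real.exp 1 := by
      exact mul_lt_mul_of_pos_left he hN0
    calc N * Real.exp (-b / t) = Real.exp (-b/t) * N := mul_comm _ _
      _ < Real.exp (-b/t) * (N * Real.exp 1) := by
          apply mul_lt_mul_of_pos_left _ (Real.exp_pos _)
          linarith
      _ = N * Real.exp 1 * Real.exp (-b/t) := by ring
  -- lower bound for the positive-class sum
  have hlower : Real.exp (-a / t) ≤
      ∑ s ∈ (S m).filter (· ∈ C), Real.exp (-‖s - θ‖ ^ 2 / t) := by
    have hmem : s₀ ∈ (S m).filter (· ∈ C) := Finset.mem_filter.mpr ⟨hs₀m, hs₀C⟩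
    have h := Finset.single_le_sum (f := fun s => Real.exp (-‖s - θ‖ ^ 2 / t))
      (fun s _ => (Real.exp_pos _).le) hmem
    rw [ha]
    exact h
  exact lt_of_le_of_lt hupper (lt_of_lt_of_le hkey hlower)
end

section
/- Let x_1, …, x_m be pairwise distinct points of ℝ^d and let y_1, …, y_m ∈ {−1, 1}. Then there exists σ₀ > 0 such that for every σ with 0 < σ ≤ σ₀ and every index j, y_j · (Σ_{i=1}^m y_i · exp(−‖x_i − x_j‖²/(2σ²))) > 0; that is, for all sufficiently small bandwidths the simplified Gaussian RBF classifier with unit weights classifies every training example correctly. -/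
/-- Perfect training classification: for pairwise distinct training points with
labels in `{−1, 1}`, there is a bandwidth `σ₀ > 0` such that for every
`0 < σ ≤ σ₀`, the simplified Gaussian RBF classifier with unit weights
classifies every training example correctly. -/
theorem statement13 {d m : ℕ} (x : Fin m → EuclideanSpace ℝ (Fin d))
    (hx : Function.Injective x) (y : Fin m → ℝ)
    (hy : ∀ i, y i = 1 ∨ y i = -1) :
    ∃ σ₀ > (0 : ℝ), ∀ σ : ℝ, 0 < σ → σ ≤ σ₀ → ∀ j : Fin m,
      0 < y j * ∑ i, y i * Real.exp (-‖x i - x j‖ ^ 2 / (2 * σ ^ 2)) := by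
  by_cases hm : m ≤ 1
  · refine ⟨1, one_pos, fun σ hσ hσ1 j => ?_⟩
    have huniv : (Finset.univ : Finset (Fin m)) = {j} := by
      apply Finset.eq_singleton_iff_unique_mem.mpr
      refine ⟨Finset.mem_univ j, fun i _ => ?_⟩
      have h1 := i.isLt
      have h2 := j.isLt
      exact Fin.ext (by omega)
    rw [huniv, Finset.sum_singleton, sub_self, norm_zero]
    rcases hy j with h | h <;> simp [h]
  · push_neg at hm
    have hTne : (Finset.univ.filter (fun p : Fin m × Fin m => p.1 ≠ p.2)).Nonempty := by
      refine ⟨(⟨0, by omega⟩, ⟨1, by omega⟩), ?_⟩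
      simp only [Finset.mem_filter, Finset.mem_univ, true_and]
      intro h
      simp only [Prod.mk.injEq, Fin.mk.injEq] at h
      omega
    set c := (Finset.univ.filter (fun p : Fin m × Fin m => p.1 ≠ p.2)).inf' hTne
        (fun p => ‖x p.1 - x p.2‖ ^ 2) with hcdef
    have hc : 0 < c := by
      rw [hcdef, Finset.lt_inf'_iff]
      intro p hp
      have hne : p.1 ≠ p.2 := (Finset.mem_filter.mp hp).2
      have hxne : x p.1 ≠ x p.2 := fun h => hne (hx h)
      exact pow_pos (norm_pos_iff.mpr (sub_ne_zero.mpr hxne)) 2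
    have hL : 0 < Real.log (2 * m) := by
      apply Real.log_pos
      have : (2 : ℝ) ≤ (m : ℝ) := by exact_mod_cast hm
      nlinarith
    refine ⟨Real.sqrt (c / (2 * Real.log (2 * m))),
      Real.sqrt_pos.mpr (div_pos hc (by positivity)), fun σ hσ hσ0 j => ?_⟩
    have hσ2 : σ ^ 2 ≤ c / (2 * Real.log (2 * m)) := by
      have := pow_le_pow_left₀ hσ.le hσ0 2
      rwa [Real.sq_sqrt (le_of_lt (div_pos hc (by positivity)))] at this
    have hE : ∀ i : Fin m, i ≠ j →
        Real.exp (-‖x i - x j‖ ^ 2 / (2 * σ ^ 2)) ≤ 1 / (2 * m) := by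
      intro i hij
      have h1 : c ≤ ‖x i - x j‖ ^ 2 := by
        rw [hcdef]
        exact Finset.inf'_le (fun p : Fin m × Fin m => ‖x p.1 - x p.2‖ ^ 2)
          (Finset.mem_filter.mpr ⟨Finset.mem_univ (i, j), hij⟩)
      have hσpos : (0 : ℝ) < 2 * σ ^ 2 := by positivity
      have h2 : Real.log (2 * m) ≤ c / (2 * σ ^ 2) := by
        rw [le_div_iff₀ hσpos]
        rw [le_div_iff₀ (by positivity : (0:ℝ) < 2 * Real.log (2 * m))] at hσ2
        nlinarith
      have h3 : -‖x i - x j‖ ^ 2 / (2 * σ ^ 2) ≤ -Real.log (2 * m) := by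
        rw [neg_div, neg_le_neg_iff]
        exact le_trans h2 (div_le_div_of_nonneg_right h1 hσpos.le)
      calc Real.exp (-‖x i - x j‖ ^ 2 / (2 * σ ^ 2))
          ≤ Real.exp (-Real.log (2 * m)) := Real.exp_le_exp.mpr h3
        _ = 1 / (2 * m) := by
            rw [Real.exp_neg, Real.exp_log (by positivity : (0:ℝ) < 2 * m)]
            rw [one_div]
    rw [Finset.mul_sum, ← Finset.add_sum_erase _ _ (Finset.mem_univ j)]
    have hterm : y j * (y j * Real.exp (-‖x j - x j‖ ^ 2 / (2 * σ ^ 2))) = 1 := by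
      rw [sub_self, norm_zero]
      rcases hy j with h | h <;> simp [h]
    rw [hterm]
    have hbound : ∀ i ∈ Finset.univ.erase j,
        -(1 / (2 * (m:ℝ))) ≤ y j * (y i * Real.exp (-‖x i - x j‖ ^ 2 / (2 * σ ^ 2))) := by
      intro i hi
      have hij : i ≠ j := Finset.ne_of_mem_erase hi
      have hE' := hE i hij
      have hpos := Real.exp_pos (-‖x i - x j‖ ^ 2 / (2 * σ ^ 2))
      rcases hy j with h1 | h1 <;> rcases hy i with h2 | h2 <;>
        simp only [h1, h2] <;> nlinarith
    have hcard : (Finset.univ.erase j).card = m - 1 := by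
      rw [Finset.card_erase_of_mem (Finset.mem_univ j), Finset.card_univ, Fintype.card_fin]
    have hsum : (Finset.univ.erase j).card • (-(1 / (2 * (m:ℝ)))) ≤
        ∑ i ∈ Finset.univ.erase j, y j * (y i * Real.exp (-‖x i - x j‖ ^ 2 / (2 * σ ^ 2))) :=
      Finset.card_nsmul_le_sum _ _ _ hbound
    rw [hcard] at hsum
    have hcast : ((m - 1 : ℕ) : ℝ) = (m : ℝ) - 1 := by
      rw [Nat.cast_sub (by omega : 1 ≤ m), Nat.cast_one]
    rw [nsmul_eq_mul, hcast] at hsum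
    have hm' : (2 : ℝ) ≤ (m : ℝ) := by exact_mod_cast hm
    have : ((m:ℝ) - 1) * (1 / (2 * m)) < 1 := by
      rw [mul_one_div, div_lt_one (by positivity)]
      linarith
    nlinarith
end
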